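/- arXiv:2208.01519 — 6 statements merged into one kernel-verified Lean document; each statement's English description precedes it below -/
import Mathlib

section
/- Let n₁,n₂,n₃ ≥ 3 and let W be a subset of vertices of the Hamming graph HG(n₁,n₂,n₃;3). Then two distinct vertices α = (a₁,a₂,a₃) and β = (b₁,b₂,b₃), neither of which lies in W, are resolved by W (i.e., some w ∈ W has d(α,w) ≠ d(β,w)) if and only if W_{1,a₁} ∪ W_{2,a₂} ∪ W_{3,a₃} ≠ W_{1,b₁} ∪ W_{2,b₂} ∪ W_{3,b₃}. -/
/-- The generalized Hamming graph `HG(n₁,n₂,n₃;3)`: vertices are triples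
(modeled with `Fin nᵢ`), adjacent iff they differ in all three coordinates. -/
def HG (n₁ n₂ n₃ : ℕ) : SimpleGraph (Fin n₁ × Fin n₂ × Fin n₃) where
  Adj x y := x.1 ≠ y.1 ∧ x.2.1 ≠ y.2.1 ∧ x.2.2 ≠ y.2.2
  symm := ⟨fun x y h => ⟨h.1.symm, h.2.1.symm, h.2.2.symm⟩⟩
  loopless := ⟨fun x h => h.1 rfl⟩

/-- `W` is a resolving set for `HG(n₁,n₂,n₃;3)`: every pair of distinct vertices not
in `W` is resolved by some landmark in `W`. -/
def IsResolving {n₁ n₂ n₃ : ℕ} (W : Set (Fin n₁ × Fin n₂ × Fin n₃)) : Prop :=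
  ∀ x y : Fin n₁ × Fin n₂ × Fin n₃, x ∉ W → y ∉ W → x ≠ y →
    ∃ w ∈ W, (HG n₁ n₂ n₃).dist x w ≠ (HG n₁ n₂ n₃).dist y w

/-- The metric dimension of `HG(n₁,n₂,n₃;3)`: minimum size of a resolving set. -/
noncomputable def metricDim (n₁ n₂ n₃ : ℕ) : ℕ :=
  sInf {k | ∃ W : Set (Fin n₁ × Fin n₂ × Fin n₃), IsResolving W ∧ W.ncard = k}

/-- The block `W_{1,a}`: landmarks whose first coordinate is `a`. -/
def block1 {n₁ n₂ n₃ : ℕ} (W : Set (Fin n₁ × Fin n₂ × Fin n₃)) (a : Fin n₁) :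
    Set (Fin n₁ × Fin n₂ × Fin n₃) := {w ∈ W | w.1 = a}

/-- The block `W_{2,a}`: landmarks whose second coordinate is `a`. -/
def block2 {n₁ n₂ n₃ : ℕ} (W : Set (Fin n₁ × Fin n₂ × Fin n₃)) (a : Fin n₂) :
    Set (Fin n₁ × Fin n₂ × Fin n₃) := {w ∈ W | w.2.1 = a}

/-- The block `W_{3,a}`: landmarks whose third coordinate is `a`. -/
def block3 {n₁ n₂ n₃ : ℕ} (W : Set (Fin n₁ × Fin n₂ × Fin n₃)) (a : Fin n₃) :
    Set (Fin n₁ × Fin n₂ × Fin n₃) := {w ∈ W | w.2.2 = a}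

/-!
Any two vertices of `HG(n₁,n₂,n₃;3)` have a common neighbour, since each coordinate has a third
value avoiding both. Hence the distance from a landmark `w` to a vertex `v ≠ w` is `1` or `2`
according as `v` and `w` are adjacent or not, and `w` resolves `α` and `β` exactly when it is
adjacent to one of them but not the other. The union of the three blocks at `v` is precisely the
set of landmarks sharing a coordinate with `v`, i.e. not adjacent to `v`.
-/

namespace SimpleGraph

variable {V : Type*} {G : SimpleGraph V} {u v w : V}

lemma dist_eq_two_of_not_adj (huv : u ≠ v) (hadj : ¬G.Adj u v)
    (hcommon : (G.commonNeighbors u v).Nonempty) : G.dist u v = 2 := by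
  rw [dist, edist_eq_two_iff.mpr ⟨huv, hadj, hcommon⟩]
  rfl

lemma dist_eq_dist_iff_adj_iff_adj (hcommon : ∀ x y, (G.commonNeighbors x y).Nonempty)
    (huw : u ≠ w) (hvw : v ≠ w) : G.dist u w = G.dist v w ↔ (G.Adj u w ↔ G.Adj v w) := by
  classical
  have hdist : ∀ x, x ≠ w → G.dist x w = if G.Adj x w then 1 else 2 := fun x hxw => by
    split_ifs with hadj
    · exact dist_eq_one_iff_adj.mpr hadj
    · exact dist_eq_two_of_not_adj hxw hadj (hcommon x w)
  rw [hdist u huw, hdist v hvw]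
  split_ifs <;> simp_all

end SimpleGraph

variable {n₁ n₂ n₃ : ℕ}

lemma HG_commonNeighbors_nonempty (h₁ : 3 ≤ n₁) (h₂ : 3 ≤ n₂) (h₃ : 3 ≤ n₃)
    (x y : Fin n₁ × Fin n₂ × Fin n₃) : ((HG n₁ n₂ n₃).commonNeighbors x y).Nonempty := by
  obtain ⟨c₁, hx₁, hy₁⟩ := Fin.exists_ne_and_ne_of_two_lt x.1 y.1 h₁
  obtain ⟨c₂, hx₂, hy₂⟩ := Fin.exists_ne_and_ne_of_two_lt x.2.1 y.2.1 h₂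
  obtain ⟨c₃, hx₃, hy₃⟩ := Fin.exists_ne_and_ne_of_two_lt x.2.2 y.2.2 h₃
  exact ⟨(c₁, c₂, c₃), ⟨hx₁.symm, hx₂.symm, hx₃.symm⟩, ⟨hy₁.symm, hy₂.symm, hy₃.symm⟩⟩

lemma blocks_union_eq_setOf_not_adj (W : Set (Fin n₁ × Fin n₂ × Fin n₃))
    (v : Fin n₁ × Fin n₂ × Fin n₃) :
    block1 W v.1 ∪ block2 W v.2.1 ∪ block3 W v.2.2 = {w ∈ W | ¬(HG n₁ n₂ n₃).Adj v w} := by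
  ext w
  simp only [block1, block2, block3, HG, Set.mem_union, Set.mem_ofPred_eq]
  grind

theorem stmt1_general (n₁ n₂ n₃ : ℕ) (h₁ : 3 ≤ n₁) (h₂ : 3 ≤ n₂) (h₃ : 3 ≤ n₃)
    (W : Set (Fin n₁ × Fin n₂ × Fin n₃))
    (α β : Fin n₁ × Fin n₂ × Fin n₃) (hα : α ∉ W) (hβ : β ∉ W) :
    (∃ w ∈ W, (HG n₁ n₂ n₃).dist α w ≠ (HG n₁ n₂ n₃).dist β w) ↔
      block1 W α.1 ∪ block2 W α.2.1 ∪ block3 W α.2.2 ≠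
        block1 W β.1 ∪ block2 W β.2.1 ∪ block3 W β.2.2 := by
  have hresolves : ∀ w ∈ W, (HG n₁ n₂ n₃).dist α w = (HG n₁ n₂ n₃).dist β w ↔
      ((HG n₁ n₂ n₃).Adj α w ↔ (HG n₁ n₂ n₃).Adj β w) := fun w hw =>
    SimpleGraph.dist_eq_dist_iff_adj_iff_adj (HG_commonNeighbors_nonempty h₁ h₂ h₃)
      (ne_of_mem_of_not_mem hw hα).symm (ne_of_mem_of_not_mem hw hβ).symm
  rw [blocks_union_eq_setOf_not_adj, blocks_union_eq_setOf_not_adj, Ne, Set.ext_iff]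
  simp only [Set.mem_ofPred_eq, not_forall]
  refine exists_congr fun w => ?_
  by_cases hw : w ∈ W
  · simp [hw, hresolves w hw, not_iff_not]
  · simp [hw]

theorem stmt1 (n₁ n₂ n₃ : ℕ) (h₁ : 3 ≤ n₁) (h₂ : 3 ≤ n₂) (h₃ : 3 ≤ n₃)
    (W : Set (Fin n₁ × Fin n₂ × Fin n₃))
    (α β : Fin n₁ × Fin n₂ × Fin n₃) (hαβ : α ≠ β) (hα : α ∉ W) (hβ : β ∉ W) :
    (∃ w ∈ W, (HG n₁ n₂ n₃).dist α w ≠ (HG n₁ n₂ n₃).dist β w) ↔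
      block1 W α.1 ∪ block2 W α.2.1 ∪ block3 W α.2.2 ≠
        block1 W β.1 ∪ block2 W β.2.1 ∪ block3 W β.2.2 :=
  stmt1_general n₁ n₂ n₃ h₁ h₂ h₃ W α β hα hβ
end

section
/- Let n₁,n₂,n₃ ≥ 3. If W is a resolving set for the Hamming graph HG(n₁,n₂,n₃;3), then |W_{i,a}| + |W_{i,b}| ≥ 3 for every i ∈ {1,2,3} and every pair of distinct values a,b ∈ [nᵢ]. -/
lemma Set.exists_subset_pair_of_ncard_le_two {α : Type*} [Nonempty α] {S : Set α}
    (hS : S.Finite) (h : S.ncard ≤ 2) : ∃ u v, S ⊆ {u, v} := by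
  interval_cases hcard : S.ncard
  · rw [Set.ncard_eq_zero hS] at hcard
    exact ⟨Classical.arbitrary α, Classical.arbitrary α, by simp [hcard]⟩
  · obtain ⟨u, rfl⟩ := Set.ncard_eq_one.mp hcard
    exact ⟨u, u, by simp⟩
  · obtain ⟨u, v, -, rfl⟩ := Set.ncard_eq_two.mp hcard
    exact ⟨u, v, subset_rfl⟩

lemma exists_forall_mem_pair_fst_eq_iff_snd_ne {β γ : Type*} (hβ : 3 ≤ ENat.card β)
    (hγ : 3 ≤ ENat.card γ) (u v : β × γ) :
    ∃ c d, ∀ p ∈ ({u, v} : Set (β × γ)), (p.1 = c ↔ p.2 ≠ d) := by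
  by_cases h₁ : u.1 = v.1
  · obtain ⟨d, hdu, hdv⟩ := ENat.exists_ne_ne_of_three_le hγ u.2 v.2
    refine ⟨u.1, d, ?_⟩
    rintro p (rfl | rfl)
    · exact iff_of_true rfl hdu.symm
    · exact iff_of_true h₁.symm hdv.symm
  by_cases h₂ : u.2 = v.2
  · obtain ⟨c, hcu, hcv⟩ := ENat.exists_ne_ne_of_three_le hβ u.1 v.1
    refine ⟨c, u.2, ?_⟩
    rintro p (rfl | rfl)
    · exact iff_of_false hcu.symm (not_not.mpr rfl)
    · exact iff_of_false hcv.symm (not_not.mpr h₂.symm)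
  · refine ⟨u.1, v.2, ?_⟩
    rintro p (rfl | rfl)
    · exact iff_of_true rfl h₂
    · exact iff_of_false (Ne.symm h₁) (not_not.mpr rfl)

namespace HG

variable {n₁ n₂ n₃ : ℕ}

lemma dist_eq (h₁ : 3 ≤ n₁) (h₂ : 3 ≤ n₂) (h₃ : 3 ≤ n₃) (x y : Fin n₁ × Fin n₂ × Fin n₃) :
    (HG n₁ n₂ n₃).dist x y =
      if x = y then 0 else if x.1 ≠ y.1 ∧ x.2.1 ≠ y.2.1 ∧ x.2.2 ≠ y.2.2 then 1 else 2 := by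
  split_ifs with hxy hadj
  · rw [hxy, SimpleGraph.dist_self]
  · exact SimpleGraph.dist_eq_one_iff_adj.mpr hadj
  · have three_le (n : ℕ) (h : 3 ≤ n) : 3 ≤ ENat.card (Fin n) := by simpa using h
    obtain ⟨c, hcx, hcy⟩ := ENat.exists_ne_ne_of_three_le (three_le _ h₁) x.1 y.1
    obtain ⟨d, hdx, hdy⟩ := ENat.exists_ne_ne_of_three_le (three_le _ h₂) x.2.1 y.2.1
    obtain ⟨e, hex, hey⟩ := ENat.exists_ne_ne_of_three_le (three_le _ h₃) x.2.2 y.2.2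
    have hx : (HG n₁ n₂ n₃).Adj x (c, d, e) := ⟨hcx.symm, hdx.symm, hex.symm⟩
    have hy : (HG n₁ n₂ n₃).Adj (c, d, e) y := ⟨hcy, hdy, hey⟩
    have hle : (HG n₁ n₂ n₃).dist x y ≤ 2 := by
      simpa using SimpleGraph.dist_le (hx.toWalk.append hy.toWalk)
    have hpos : 0 < (HG n₁ n₂ n₃).dist x y := (hx.reachable.trans hy.reachable).pos_dist_of_ne hxy
    have hne : (HG n₁ n₂ n₃).dist x y ≠ 1 := fun h => hadj (SimpleGraph.dist_eq_one_iff_adj.mp h)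
    omega

lemma dist_eq_dist_of_fst_eq_iff_snd_ne (h₁ : 3 ≤ n₁) (h₂ : 3 ≤ n₂) (h₃ : 3 ≤ n₃)
    {a b : Fin n₁} {c : Fin n₂} {d : Fin n₃} {w : Fin n₁ × Fin n₂ × Fin n₃}
    (hw : w.1 = a ∨ w.1 = b → (w.2.1 = c ↔ w.2.2 ≠ d)) :
    (HG n₁ n₂ n₃).dist (a, c, d) w = (HG n₁ n₂ n₃).dist (b, c, d) w := by
  rw [dist_eq h₁ h₂ h₃, dist_eq h₁ h₂ h₃]
  simp only [Prod.ext_iff]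
  grind

end HG

section Permute

variable {α β γ : Type*}

def swapFstSnd : α × β × γ ≃ β × α × γ where
  toFun x := (x.2.1, x.1, x.2.2)
  invFun x := (x.2.1, x.1, x.2.2)
  left_inv _ := rfl
  right_inv _ := rfl

def swapFstThd : α × β × γ ≃ γ × β × α where
  toFun x := (x.2.2, x.2.1, x.1)
  invFun x := (x.2.2, x.2.1, x.1)
  left_inv _ := rfl
  right_inv _ := rfl

end Permute

namespace IsResolving

variable {n₁ n₂ n₃ : ℕ} {W : Set (Fin n₁ × Fin n₂ × Fin n₃)}

theorem three_le_ncard_block1_add (h₁ : 3 ≤ n₁) (h₂ : 3 ≤ n₂) (h₃ : 3 ≤ n₃)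
    (hW : IsResolving W) {a b : Fin n₁} (hab : a ≠ b) :
    3 ≤ (block1 W a).ncard + (block1 W b).ncard := by
  by_contra! hlt
  have : Nonempty (Fin n₂ × Fin n₃) := ⟨(⟨0, by omega⟩, ⟨0, by omega⟩)⟩
  have htails : (Prod.snd '' (block1 W a ∪ block1 W b)).ncard ≤ 2 :=
    (Set.ncard_image_le (Set.toFinite _)).trans ((Set.ncard_union_le _ _).trans (by omega))
  obtain ⟨u, v, huv⟩ := Set.exists_subset_pair_of_ncard_le_two (Set.toFinite _) htails
  obtain ⟨c, d, hcd⟩ := exists_forall_mem_pair_fst_eq_iff_snd_ne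
    (by simpa using h₂) (by simpa using h₃) u v
  have key (w) (hw : w ∈ W) (hwab : w.1 = a ∨ w.1 = b) : w.2.1 = c ↔ w.2.2 ≠ d :=
    hcd w.2 (huv ⟨w, hwab.imp (⟨hw, ·⟩) (⟨hw, ·⟩), rfl⟩)
  have hx : (a, c, d) ∉ W := fun h => by simpa using key _ h (.inl rfl)
  have hy : (b, c, d) ∉ W := fun h => by simpa using key _ h (.inr rfl)
  obtain ⟨w, hw, hne⟩ := hW _ _ hx hy (by simp [hab])
  exact hne (HG.dist_eq_dist_of_fst_eq_iff_snd_ne h₁ h₂ h₃ (key w hw))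

theorem image {m₁ m₂ m₃ : ℕ} (e : Fin n₁ × Fin n₂ × Fin n₃ ≃ Fin m₁ × Fin m₂ × Fin m₃)
    (he : ∀ x y, (HG m₁ m₂ m₃).dist (e x) (e y) = (HG n₁ n₂ n₃).dist x y)
    (hW : IsResolving W) : IsResolving (e '' W) := by
  intro x y hx hy hxy
  rw [e.image_eq_preimage_symm] at hx hy
  obtain ⟨w, hw, hne⟩ := hW (e.symm x) (e.symm y) hx hy (e.symm.injective.ne hxy)
  refine ⟨e w, Set.mem_image_of_mem e hw, ?_⟩
  simpa only [← he, Equiv.apply_symm_apply] using hne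

theorem image_swapFstSnd (h₁ : 3 ≤ n₁) (h₂ : 3 ≤ n₂) (h₃ : 3 ≤ n₃) (hW : IsResolving W) :
    IsResolving (swapFstSnd '' W) :=
  hW.image swapFstSnd fun x y => by
    rw [HG.dist_eq h₂ h₁ h₃, HG.dist_eq h₁ h₂ h₃]
    simp only [swapFstSnd, Equiv.coe_fn_mk, Prod.ext_iff]
    grind

theorem image_swapFstThd (h₁ : 3 ≤ n₁) (h₂ : 3 ≤ n₂) (h₃ : 3 ≤ n₃) (hW : IsResolving W) :
    IsResolving (swapFstThd '' W) :=
  hW.image swapFstThd fun x y => by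
    rw [HG.dist_eq h₃ h₂ h₁, HG.dist_eq h₁ h₂ h₃]
    simp only [swapFstThd, Equiv.coe_fn_mk, Prod.ext_iff]
    grind

end IsResolving

section Blocks

variable {n₁ n₂ n₃ : ℕ} (W : Set (Fin n₁ × Fin n₂ × Fin n₃))

lemma ncard_block1_image_swapFstSnd (a : Fin n₂) :
    (block1 (swapFstSnd '' W) a).ncard = (block2 W a).ncard := by
  have : block1 (swapFstSnd '' W) a = swapFstSnd '' block2 W a := by
    ext ⟨x₁, x₂, x₃⟩
    simp [block1, block2, swapFstSnd, and_comm]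
  rw [this, Set.ncard_image_of_injective _ swapFstSnd.injective]

lemma ncard_block1_image_swapFstThd (a : Fin n₃) :
    (block1 (swapFstThd '' W) a).ncard = (block3 W a).ncard := by
  have : block1 (swapFstThd '' W) a = swapFstThd '' block3 W a := by
    ext ⟨x₁, x₂, x₃⟩
    simp [block1, block3, swapFstThd, and_comm]
  rw [this, Set.ncard_image_of_injective _ swapFstThd.injective]

end Blocks

theorem stmt2 (n₁ n₂ n₃ : ℕ) (h₁ : 3 ≤ n₁) (h₂ : 3 ≤ n₂) (h₃ : 3 ≤ n₃)
    (W : Set (Fin n₁ × Fin n₂ × Fin n₃)) (hW : IsResolving W) :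
    (∀ a b : Fin n₁, a ≠ b → 3 ≤ (block1 W a).ncard + (block1 W b).ncard) ∧
    (∀ a b : Fin n₂, a ≠ b → 3 ≤ (block2 W a).ncard + (block2 W b).ncard) ∧
    (∀ a b : Fin n₃, a ≠ b → 3 ≤ (block3 W a).ncard + (block3 W b).ncard) := by
  refine ⟨fun a b hab => hW.three_le_ncard_block1_add h₁ h₂ h₃ hab,
    fun a b hab => ?_, fun a b hab => ?_⟩
  · rw [← ncard_block1_image_swapFstSnd, ← ncard_block1_image_swapFstSnd]
    exact (hW.image_swapFstSnd h₁ h₂ h₃).three_le_ncard_block1_add h₂ h₁ h₃ hab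
  · rw [← ncard_block1_image_swapFstThd, ← ncard_block1_image_swapFstThd]
    exact (hW.image_swapFstThd h₁ h₂ h₃).three_le_ncard_block1_add h₃ h₂ h₁ hab
end

section
/- For n₃ ≥ n₂ ≥ n₁ ≥ 3, every resolving set of the Hamming graph HG(n₁,n₂,n₃;3) has at least 2n₃ − 1 elements; equivalently, the metric dimension of HG(n₁,n₂,n₃;3) is at least 2n₃ − 1. -/
/-!
When every `nᵢ ≥ 3`, any two vertices have a common neighbour, so a landmark `w` is at
distance 1 or 2 from a vertex `x ∉ W` according to whether `w` and `x` differ in all coordinates.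
Suppose two layers `x₃ = a` and `x₃ = a'` held at most two landmarks `u`, `v`. Choose `(p, q)`
different from `(u₁, u₂)` and `(v₁, v₂)` but sharing a coordinate with each of them. Then
`(p, q, a)` and `(p, q, a')` are not landmarks, and a landmark separating them would have to lie
in one of the two layers and differ from `(p, q)` in both first coordinates, which neither `u`
nor `v` does. Hence any two layers hold at least three landmarks together, and summing over the
`n₃` layers gives at least `2 n₃ - 1`.
-/

lemma Fin.exists_ne_ne {n : ℕ} (hn : 3 ≤ n) (a b : Fin n) : ∃ c, c ≠ a ∧ c ≠ b :=
  Cardinal.exists_ne_ne_of_three_le (by simpa using (Nat.cast_le (α := Cardinal.{0})).mpr hn) a b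

lemma exists_ne_ne_and_eq_or_eq {α β : Type*} (hα : ∀ a a' : α, ∃ c, c ≠ a ∧ c ≠ a')
    (hβ : ∀ b b' : β, ∃ c, c ≠ b ∧ c ≠ b') (u v : α × β) :
    ∃ z : α × β, z ≠ u ∧ z ≠ v ∧ (z.1 = u.1 ∨ z.2 = u.2) ∧ (z.1 = v.1 ∨ z.2 = v.2) := by
  by_cases h₁ : u.1 = v.1
  · obtain ⟨b, hbu, hbv⟩ := hβ u.2 v.2
    exact ⟨(u.1, b), fun h => hbu (congrArg Prod.snd h), fun h => hbv (congrArg Prod.snd h),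
      .inl rfl, .inl h₁⟩
  by_cases h₂ : u.2 = v.2
  · obtain ⟨a, hau, hav⟩ := hα u.1 v.1
    exact ⟨(a, u.2), fun h => hau (congrArg Prod.fst h), fun h => hav (congrArg Prod.fst h),
      .inr rfl, .inr h₂⟩
  · exact ⟨(u.1, v.2), fun h => h₂ (Prod.ext_iff.mp h).2.symm, fun h => h₁ (Prod.ext_iff.mp h).1,
      .inl rfl, .inr rfl⟩

lemma Finset.two_mul_card_sub_one_le_sum {ι : Type*} {s : Finset ι} (hs : 2 ≤ s.card)
    (f : ι → ℕ) (hf : ∀ a ∈ s, ∀ b ∈ s, a ≠ b → 3 ≤ f a + f b) :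
    2 * s.card - 1 ≤ ∑ a ∈ s, f a := by
  classical
  by_cases hsmall : ∃ a ∈ s, f a ≤ 1
  · obtain ⟨a₀, ha₀, hfa₀⟩ := hsmall
    have hrest : (s.erase a₀).card • (3 - f a₀) ≤ ∑ a ∈ s.erase a₀, f a :=
      Finset.card_nsmul_le_sum _ _ _ fun a ha =>
        Nat.sub_le_of_le_add (by linarith [hf a (mem_of_mem_erase ha) a₀ ha₀ (ne_of_mem_erase ha)])
    rw [Finset.card_erase_of_mem ha₀, smul_eq_mul] at hrest
    rw [← Finset.add_sum_erase s f ha₀]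
    interval_cases f a₀ <;> omega
  · push Not at hsmall
    calc 2 * s.card - 1 ≤ s.card • 2 := by rw [smul_eq_mul, mul_comm]; exact Nat.sub_le _ _
      _ ≤ ∑ a ∈ s, f a := Finset.card_nsmul_le_sum _ _ _ hsmall

lemma Set.two_lt_ncard_of_forall_exists_ne_ne {α : Type*} [Nonempty α] {s : Set α}
    (hs : s.Finite) (h : ∀ u v : α, ∃ w ∈ s, w ≠ u ∧ w ≠ v) : 2 < s.ncard := by
  obtain ⟨a, ha, -⟩ := h (Classical.arbitrary α) (Classical.arbitrary α)
  obtain ⟨b, hb, hba, -⟩ := h a a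
  obtain ⟨c, hc, hca, hcb⟩ := h a b
  exact (Set.two_lt_ncard hs).mpr ⟨a, ha, b, hb, c, hc, hba.symm, hca.symm, hcb.symm⟩

namespace HG

variable {n₁ n₂ n₃ : ℕ}

lemma exists_adj_adj (h₁ : 3 ≤ n₁) (h₂ : 3 ≤ n₂) (h₃ : 3 ≤ n₃) (x w : Fin n₁ × Fin n₂ × Fin n₃) :
    ∃ z, (HG n₁ n₂ n₃).Adj x z ∧ (HG n₁ n₂ n₃).Adj z w := by
  obtain ⟨c₁, hx₁, hw₁⟩ := Fin.exists_ne_ne h₁ x.1 w.1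
  obtain ⟨c₂, hx₂, hw₂⟩ := Fin.exists_ne_ne h₂ x.2.1 w.2.1
  obtain ⟨c₃, hx₃, hw₃⟩ := Fin.exists_ne_ne h₃ x.2.2 w.2.2
  exact ⟨(c₁, c₂, c₃), ⟨hx₁.symm, hx₂.symm, hx₃.symm⟩, ⟨hw₁, hw₂, hw₃⟩⟩

lemma dist_eq_two (h₁ : 3 ≤ n₁) (h₂ : 3 ≤ n₂) (h₃ : 3 ≤ n₃) {x w : Fin n₁ × Fin n₂ × Fin n₃}
    (hne : x ≠ w) (hnadj : ¬(HG n₁ n₂ n₃).Adj x w) : (HG n₁ n₂ n₃).dist x w = 2 := by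
  obtain ⟨z, hxz, hzw⟩ := exists_adj_adj h₁ h₂ h₃ x w
  have hedist : (HG n₁ n₂ n₃).edist x w = 2 :=
    SimpleGraph.edist_eq_two_iff.mpr ⟨hne, hnadj, z, hxz, hzw.symm⟩
  have hreach : (HG n₁ n₂ n₃).Reachable x w := (hxz.toWalk.append hzw.toWalk).reachable
  exact_mod_cast hreach.coe_dist_eq_edist.trans hedist

end HG

section Resolving

variable {n₁ n₂ n₃ : ℕ} {W : Set (Fin n₁ × Fin n₂ × Fin n₃)}

lemma IsResolving.exists_not_adj_iff (hW : IsResolving W) (h₁ : 3 ≤ n₁) (h₂ : 3 ≤ n₂)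
    (h₃ : 3 ≤ n₃) {x y : Fin n₁ × Fin n₂ × Fin n₃} (hx : x ∉ W) (hy : y ∉ W) (hxy : x ≠ y) :
    ∃ w ∈ W, ¬((HG n₁ n₂ n₃).Adj x w ↔ (HG n₁ n₂ n₃).Adj y w) := by
  obtain ⟨w, hw, hdist⟩ := hW x y hx hy hxy
  refine ⟨w, hw, fun hiff => hdist ?_⟩
  by_cases hadj : (HG n₁ n₂ n₃).Adj x w
  · rw [SimpleGraph.dist_eq_one_iff_adj.mpr hadj,
      SimpleGraph.dist_eq_one_iff_adj.mpr (hiff.mp hadj)]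
  · rw [HG.dist_eq_two h₁ h₂ h₃ (ne_of_mem_of_not_mem hw hx).symm hadj,
      HG.dist_eq_two h₁ h₂ h₃ (ne_of_mem_of_not_mem hw hy).symm (hiff.not.mp hadj)]

lemma IsResolving.exists_mem_block3_union_ne_ne (hW : IsResolving W) (h₁ : 3 ≤ n₁)
    (h₂ : 3 ≤ n₂) (h₃ : 3 ≤ n₃) {a a' : Fin n₃} (ha : a ≠ a') (u v : Fin n₁ × Fin n₂ × Fin n₃) :
    ∃ w ∈ block3 W a ∪ block3 W a', w ≠ u ∧ w ≠ v := by
  obtain ⟨⟨p, q⟩, hu, hv, hpu, hpv⟩ := exists_ne_ne_and_eq_or_eq (Fin.exists_ne_ne h₁)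
    (Fin.exists_ne_ne h₂) (u.1, u.2.1) (v.1, v.2.1)
  by_cases hx : (p, q, a) ∈ W
  · exact ⟨_, .inl ⟨hx, rfl⟩, fun h => hu (by rw [← h]), fun h => hv (by rw [← h])⟩
  by_cases hy : (p, q, a') ∈ W
  · exact ⟨_, .inr ⟨hy, rfl⟩, fun h => hu (by rw [← h]), fun h => hv (by rw [← h])⟩
  obtain ⟨w, hw, hadj⟩ := hW.exists_not_adj_iff h₁ h₂ h₃ hx hy (by simpa using ha)
  have hpw : p ≠ w.1 ∧ q ≠ w.2.1 ∧ (w.2.2 = a ∨ w.2.2 = a') := by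
    simp only [HG] at hadj
    tauto
  obtain ⟨hp, hq, hw₃⟩ := hpw
  refine ⟨w, hw₃.imp (fun h => ⟨hw, h⟩) (fun h => ⟨hw, h⟩), ?_, ?_⟩
  · rintro rfl
    exact hpu.elim hp hq
  · rintro rfl
    exact hpv.elim hp hq

lemma IsResolving.three_le_ncard_block3_add (hW : IsResolving W) (h₁ : 3 ≤ n₁) (h₂ : 3 ≤ n₂)
    (h₃ : 3 ≤ n₃) {a a' : Fin n₃} (ha : a ≠ a') :
    3 ≤ (block3 W a).ncard + (block3 W a').ncard := by
  have : Nonempty (Fin n₁ × Fin n₂ × Fin n₃) := ⟨(⟨0, by omega⟩, ⟨0, by omega⟩, ⟨0, by omega⟩)⟩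
  have hunion := Set.two_lt_ncard_of_forall_exists_ne_ne (Set.toFinite _)
    (hW.exists_mem_block3_union_ne_ne h₁ h₂ h₃ ha)
  linarith [Set.ncard_union_le (block3 W a) (block3 W a')]

end Resolving

lemma ncard_eq_sum_ncard_block3 {n₁ n₂ n₃ : ℕ} (W : Set (Fin n₁ × Fin n₂ × Fin n₃)) :
    W.ncard = ∑ a, (block3 W a).ncard := by
  classical
  obtain ⟨F, rfl⟩ := W.toFinite.exists_finset_coe
  have hblock (a : Fin n₃) : block3 (F : Set (Fin n₁ × Fin n₂ × Fin n₃)) a = ↑(F.filter (·.2.2 = a)) := by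
    ext; simp [block3]
  simp only [hblock, Set.ncard_coe_finset]
  exact Finset.card_eq_sum_card_fiberwise fun x _ => Finset.mem_univ x.2.2

lemma IsResolving.two_mul_sub_one_le_ncard {n₁ n₂ n₃ : ℕ} {W : Set (Fin n₁ × Fin n₂ × Fin n₃)}
    (hW : IsResolving W) (h₁ : 3 ≤ n₁) (h₂ : 3 ≤ n₂) (h₃ : 3 ≤ n₃) :
    2 * n₃ - 1 ≤ W.ncard := by
  rw [ncard_eq_sum_ncard_block3]
  simpa using Finset.two_mul_card_sub_one_le_sum (s := Finset.univ) (by simp; omega) _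
    fun a _ a' _ ha => hW.three_le_ncard_block3_add h₁ h₂ h₃ ha

theorem stmt3 (n₁ n₂ n₃ : ℕ) (h₁ : 3 ≤ n₁) (h₁₂ : n₁ ≤ n₂) (h₂₃ : n₂ ≤ n₃) :
    (∀ W : Set (Fin n₁ × Fin n₂ × Fin n₃), IsResolving W → 2 * n₃ - 1 ≤ W.ncard) ∧
    2 * n₃ - 1 ≤ metricDim n₁ n₂ n₃ := by
  have h₂ : 3 ≤ n₂ := h₁.trans h₁₂
  have h₃ : 3 ≤ n₃ := h₂.trans h₂₃
  have hbound W (hW : IsResolving W) := hW.two_mul_sub_one_le_ncard h₁ h₂ h₃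
  have huniv : IsResolving (Set.univ : Set (Fin n₁ × Fin n₂ × Fin n₃)) :=
    fun x _ hx => absurd (Set.mem_univ x) hx
  refine ⟨hbound, le_csInf ⟨_, Set.univ, huniv, rfl⟩ ?_⟩
  rintro k ⟨W, hW, rfl⟩
  exact hbound W hW
end

section
/- Let n₁,n₂,n₃ ≥ 3 and let W be a subset of vertices of HG(n₁,n₂,n₃;3). Suppose there exist a₁ ≠ b₁ in [n₁], a₂ ≠ b₂ in [n₂], a₃ ≠ b₃ in [n₃] and landmarks w₁,…,w₆ such that W_{1,a₁} = {w₁,w₂}, W_{1,b₁} = {w₄,w₅}, W_{2,a₂} = {w₅,w₆}, W_{2,b₂} = {w₂,w₃}, W_{3,a₃} = {w₃,w₄}, and W_{3,b₃} = {w₁,w₆} (a forbidden 6-cycle with opposite edges of the same color). Then the vertices (a₁,a₂,a₃) and (b₁,b₂,b₃) are not in W and are unresolved by W, so W is not a resolving set. -/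
/-! When every `nᵢ ≥ 3`, any two distinct vertices of `HG(n₁,n₂,n₃;3)` are at distance 1 or 2,
so a landmark `w` sees `x` and `y` alike as soon as `w` is adjacent to both or to neither.
A landmark is non-adjacent to `(a₁,a₂,a₃)` exactly when it lies in `W_{1,a₁} ∪ W_{2,a₂} ∪ W_{3,a₃}`,
and the 6-cycle makes this union equal to `W_{1,b₁} ∪ W_{2,b₂} ∪ W_{3,b₃}`: both are `{w₁,…,w₆}`.
Neither vertex is a landmark: `(a₁,a₂,a₃) ∈ W` would lie in `W_{1,a₁} = {w₁,w₂}`,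
yet `w₁ ∈ W_{3,b₃}` and `w₂ ∈ W_{2,b₂}`; symmetrically for `(b₁,b₂,b₃)`. -/

section

variable {n₁ n₂ n₃ : ℕ}

theorem HG.dist_eq_two_s6 (h₁ : 3 ≤ n₁) (h₂ : 3 ≤ n₂) (h₃ : 3 ≤ n₃)
    {x y : Fin n₁ × Fin n₂ × Fin n₃} (hne : x ≠ y) (hadj : ¬(HG n₁ n₂ n₃).Adj x y) :
    (HG n₁ n₂ n₃).dist x y = 2 := by
  obtain ⟨c₁, hc₁x, hc₁y⟩ := Fin.exists_ne_and_ne_of_two_lt x.1 y.1 h₁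
  obtain ⟨c₂, hc₂x, hc₂y⟩ := Fin.exists_ne_and_ne_of_two_lt x.2.1 y.2.1 h₂
  obtain ⟨c₃, hc₃x, hc₃y⟩ := Fin.exists_ne_and_ne_of_two_lt x.2.2 y.2.2 h₃
  have hxc : (HG n₁ n₂ n₃).Adj x (c₁, c₂, c₃) := ⟨hc₁x.symm, hc₂x.symm, hc₃x.symm⟩
  have hcy : (HG n₁ n₂ n₃).Adj (c₁, c₂, c₃) y := ⟨hc₁y, hc₂y, hc₃y⟩
  let p : (HG n₁ n₂ n₃).Walk x y := .cons hxc (.cons hcy .nil)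
  have hle : (HG n₁ n₂ n₃).dist x y ≤ 2 := SimpleGraph.dist_le p
  have hpos : (HG n₁ n₂ n₃).dist x y ≠ 0 := (p.reachable.pos_dist_of_ne hne).ne'
  have hne_one : (HG n₁ n₂ n₃).dist x y ≠ 1 := fun h => hadj (SimpleGraph.dist_eq_one_iff_adj.mp h)
  omega

theorem HG.dist_eq_dist_of_adj_iff (h₁ : 3 ≤ n₁) (h₂ : 3 ≤ n₂) (h₃ : 3 ≤ n₃)
    {x y w : Fin n₁ × Fin n₂ × Fin n₃} (hx : x ≠ w) (hy : y ≠ w)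
    (hadj : (HG n₁ n₂ n₃).Adj x w ↔ (HG n₁ n₂ n₃).Adj y w) :
    (HG n₁ n₂ n₃).dist x w = (HG n₁ n₂ n₃).dist y w := by
  by_cases hxw : (HG n₁ n₂ n₃).Adj x w
  · rw [SimpleGraph.dist_eq_one_iff_adj.mpr hxw, SimpleGraph.dist_eq_one_iff_adj.mpr (hadj.mp hxw)]
  · rw [HG.dist_eq_two_s6 h₁ h₂ h₃ hx hxw, HG.dist_eq_two_s6 h₁ h₂ h₃ hy (mt hadj.mpr hxw)]

theorem mem_blocks_iff_not_adj {W : Set (Fin n₁ × Fin n₂ × Fin n₃)}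
    {w : Fin n₁ × Fin n₂ × Fin n₃} (hw : w ∈ W) (v : Fin n₁ × Fin n₂ × Fin n₃) :
    w ∈ block1 W v.1 ∪ block2 W v.2.1 ∪ block3 W v.2.2 ↔ ¬(HG n₁ n₂ n₃).Adj v w := by
  simp only [block1, block2, block3, HG, Set.mem_union, Set.mem_ofPred_eq, hw, true_and]
  grind

theorem notMem_of_block1_subset {W : Set (Fin n₁ × Fin n₂ × Fin n₃)}
    {v : Fin n₁ × Fin n₂ × Fin n₃} {b : Fin n₂} {c : Fin n₃}
    (hsub : block1 W v.1 ⊆ block2 W b ∪ block3 W c) (hb : v.2.1 ≠ b) (hc : v.2.2 ≠ c) :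
    v ∉ W := fun hv => by
  rcases hsub ⟨hv, rfl⟩ with h | h
  exacts [hb h.2, hc h.2]

theorem not_isResolving_of_dist_eq {W : Set (Fin n₁ × Fin n₂ × Fin n₃)}
    {x y : Fin n₁ × Fin n₂ × Fin n₃} (hx : x ∉ W) (hy : y ∉ W) (hxy : x ≠ y)
    (hdist : ∀ w ∈ W, (HG n₁ n₂ n₃).dist x w = (HG n₁ n₂ n₃).dist y w) :
    ¬IsResolving W := fun hres => by
  obtain ⟨w, hw, hne⟩ := hres x y hx hy hxy
  exact hne (hdist w hw)

end

theorem stmt6_general (n₁ n₂ n₃ : ℕ) (h₁ : 3 ≤ n₁) (h₂ : 3 ≤ n₂) (h₃ : 3 ≤ n₃)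
    (W : Set (Fin n₁ × Fin n₂ × Fin n₃))
    (a₁ b₁ : Fin n₁) (hab₁ : a₁ ≠ b₁) (a₂ b₂ : Fin n₂) (hab₂ : a₂ ≠ b₂)
    (a₃ b₃ : Fin n₃) (hab₃ : a₃ ≠ b₃)
    (w₁ w₂ w₃ w₄ w₅ w₆ : Fin n₁ × Fin n₂ × Fin n₃)
    (hB₁ : block1 W a₁ = {w₁, w₂}) (hB₂ : block1 W b₁ = {w₄, w₅})
    (hB₃ : block2 W a₂ = {w₅, w₆}) (hB₄ : block2 W b₂ = {w₂, w₃})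
    (hB₅ : block3 W a₃ = {w₃, w₄}) (hB₆ : block3 W b₃ = {w₁, w₆}) :
    (a₁, a₂, a₃) ∉ W ∧ (b₁, b₂, b₃) ∉ W ∧
    (∀ w ∈ W, (HG n₁ n₂ n₃).dist (a₁, a₂, a₃) w = (HG n₁ n₂ n₃).dist (b₁, b₂, b₃) w) ∧
    ¬ IsResolving W := by
  have hx : ((a₁, a₂, a₃) : Fin n₁ × Fin n₂ × Fin n₃) ∉ W := by
    refine notMem_of_block1_subset (b := b₂) (c := b₃) ?_ hab₂ hab₃
    rw [hB₁, hB₄, hB₆]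
    grind
  have hy : ((b₁, b₂, b₃) : Fin n₁ × Fin n₂ × Fin n₃) ∉ W := by
    refine notMem_of_block1_subset (b := a₂) (c := a₃) ?_ hab₂.symm hab₃.symm
    rw [hB₂, hB₃, hB₅]
    grind
  have hblocks :
      block1 W a₁ ∪ block2 W a₂ ∪ block3 W a₃ = block1 W b₁ ∪ block2 W b₂ ∪ block3 W b₃ := by
    rw [hB₁, hB₂, hB₃, hB₄, hB₅, hB₆]
    grind
  have hadj : ∀ w ∈ W, (HG n₁ n₂ n₃).Adj (a₁, a₂, a₃) w ↔ (HG n₁ n₂ n₃).Adj (b₁, b₂, b₃) w :=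
    fun w hw => by
      rw [← not_iff_not, ← mem_blocks_iff_not_adj hw, ← mem_blocks_iff_not_adj hw]
      exact hblocks ▸ Iff.rfl
  have hdist : ∀ w ∈ W,
      (HG n₁ n₂ n₃).dist (a₁, a₂, a₃) w = (HG n₁ n₂ n₃).dist (b₁, b₂, b₃) w := fun w hw =>
    HG.dist_eq_dist_of_adj_iff h₁ h₂ h₃ (ne_of_mem_of_not_mem hw hx).symm
      (ne_of_mem_of_not_mem hw hy).symm (hadj w hw)
  exact ⟨hx, hy, hdist, not_isResolving_of_dist_eq hx hy (by simp [hab₁]) hdist⟩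

theorem stmt6 (n₁ n₂ n₃ : ℕ) (h₁ : 3 ≤ n₁) (h₂ : 3 ≤ n₂) (h₃ : 3 ≤ n₃)
    (W : Set (Fin n₁ × Fin n₂ × Fin n₃))
    (a₁ b₁ : Fin n₁) (hab₁ : a₁ ≠ b₁) (a₂ b₂ : Fin n₂) (hab₂ : a₂ ≠ b₂)
    (a₃ b₃ : Fin n₃) (hab₃ : a₃ ≠ b₃)
    (w₁ w₂ w₃ w₄ w₅ w₆ : Fin n₁ × Fin n₂ × Fin n₃)
    (hdist : List.Pairwise (· ≠ ·) [w₁, w₂, w₃, w₄, w₅, w₆])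
    (hB₁ : block1 W a₁ = {w₁, w₂}) (hB₂ : block1 W b₁ = {w₄, w₅})
    (hB₃ : block2 W a₂ = {w₅, w₆}) (hB₄ : block2 W b₂ = {w₂, w₃})
    (hB₅ : block3 W a₃ = {w₃, w₄}) (hB₆ : block3 W b₃ = {w₁, w₆}) :
    (a₁, a₂, a₃) ∉ W ∧ (b₁, b₂, b₃) ∉ W ∧
    (∀ w ∈ W, (HG n₁ n₂ n₃).dist (a₁, a₂, a₃) w = (HG n₁ n₂ n₃).dist (b₁, b₂, b₃) w) ∧
    ¬ IsResolving W :=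
  stmt6_general n₁ n₂ n₃ h₁ h₂ h₃ W a₁ b₁ hab₁ a₂ b₂ hab₂ a₃ b₃ hab₃ w₁ w₂ w₃ w₄ w₅ w₆ hB₁ hB₂ hB₃
    hB₄ hB₅ hB₆
end

section
/- Let n₁,n₂,n₃ ≥ 3 and let W be a subset of vertices of HG(n₁,n₂,n₃;3). Suppose there exist a₁ ∈ [n₁], a₂ ∈ [n₂], a₃ ∈ [n₃] and landmarks w₁,w₂,w₃ such that W_{1,a₁} = {w₁,w₂}, W_{2,a₂} = {w₂,w₃}, and W_{3,a₃} = {w₃,w₁} (a rainbow triangle). Let u = (n₁+1, n₂+1, n₃+1). Then in the larger Hamming graph HG(n₁+1,n₂+1,n₃+1;3), the set W ∪ {u} is not a resolving set: the vertices (a₁, a₂, n₃+1) and (a₁, n₂+1, a₃) are unresolved. -/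
/-!
In `HG(m₁,m₂,m₃;3)` with all `mᵢ ≥ 3` two distinct non-adjacent vertices have a common
neighbour, so a landmark is at equal distance from two other vertices exactly when it is adjacent
to both or to neither. The new landmark `u` is adjacent to neither `x = (a₁, a₂, n₃+1)` nor
`y = (a₁, n₂+1, a₃)`. An old landmark `v` is adjacent to `x` iff `v₁ ≠ a₁ ∧ v₂ ≠ a₂`, and to `y`
iff `v₁ ≠ a₁ ∧ v₃ ≠ a₃`; these agree because `w₃` is the only landmark outside `W_{1,a₁}` that
lies in `W_{2,a₂}` or in `W_{3,a₃}`.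
-/

lemma Fin.exists_ne_and_ne {m : ℕ} (h : 3 ≤ m) (a b : Fin m) : ∃ c, c ≠ a ∧ c ≠ b := by
  have hcard : ({a, b} : Finset (Fin m)).card < (Finset.univ : Finset (Fin m)).card :=
    calc ({a, b} : Finset (Fin m)).card ≤ 2 := Finset.card_le_two
      _ < m := by omega
      _ = _ := (Finset.card_fin m).symm
  obtain ⟨c, -, hc⟩ := Finset.exists_mem_notMem_of_card_lt_card hcard
  simp only [Finset.mem_insert, Finset.mem_singleton, not_or] at hc
  exact ⟨c, hc⟩

namespace HG

variable {m₁ m₂ m₃ : ℕ}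

lemma dist_eq_two_of_not_adj (h₁ : 3 ≤ m₁) (h₂ : 3 ≤ m₂) (h₃ : 3 ≤ m₃)
    {x y : Fin m₁ × Fin m₂ × Fin m₃} (hne : x ≠ y) (hxy : ¬ (HG m₁ m₂ m₃).Adj x y) :
    (HG m₁ m₂ m₃).dist x y = 2 := by
  obtain ⟨c₁, hc₁⟩ := Fin.exists_ne_and_ne h₁ x.1 y.1
  obtain ⟨c₂, hc₂⟩ := Fin.exists_ne_and_ne h₂ x.2.1 y.2.1
  obtain ⟨c₃, hc₃⟩ := Fin.exists_ne_and_ne h₃ x.2.2 y.2.2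
  have hxz : (HG m₁ m₂ m₃).Adj x (c₁, c₂, c₃) := ⟨hc₁.1.symm, hc₂.1.symm, hc₃.1.symm⟩
  have hzy : (HG m₁ m₂ m₃).Adj (c₁, c₂, c₃) y := ⟨hc₁.2, hc₂.2, hc₃.2⟩
  have hle : (HG m₁ m₂ m₃).dist x y ≤ 2 := by
    simpa using SimpleGraph.dist_le (hxz.toWalk.append hzy.toWalk)
  have hpos : 0 < (HG m₁ m₂ m₃).dist x y := (hxz.reachable.trans hzy.reachable).pos_dist_of_ne hne
  have hne_one : (HG m₁ m₂ m₃).dist x y ≠ 1 := fun h => hxy (SimpleGraph.dist_eq_one_iff_adj.mp h)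
  omega

lemma dist_eq_dist_of_adj_iff_s7 (h₁ : 3 ≤ m₁) (h₂ : 3 ≤ m₂) (h₃ : 3 ≤ m₃)
    {x y w : Fin m₁ × Fin m₂ × Fin m₃} (hx : x ≠ w) (hy : y ≠ w)
    (hadj : (HG m₁ m₂ m₃).Adj x w ↔ (HG m₁ m₂ m₃).Adj y w) :
    (HG m₁ m₂ m₃).dist x w = (HG m₁ m₂ m₃).dist y w := by
  by_cases hxw : (HG m₁ m₂ m₃).Adj x w
  · rw [SimpleGraph.dist_eq_one_iff_adj.mpr hxw, SimpleGraph.dist_eq_one_iff_adj.mpr (hadj.mp hxw)]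
  · rw [dist_eq_two_of_not_adj h₁ h₂ h₃ hx hxw,
      dist_eq_two_of_not_adj h₁ h₂ h₃ hy (mt hadj.mpr hxw)]

end HG

lemma snd_fst_eq_iff_snd_snd_eq_of_rainbow {n₁ n₂ n₃ : ℕ} {W : Set (Fin n₁ × Fin n₂ × Fin n₃)}
    {a₁ : Fin n₁} {a₂ : Fin n₂} {a₃ : Fin n₃} {w₁ w₂ w₃ : Fin n₁ × Fin n₂ × Fin n₃}
    (hB₁ : block1 W a₁ = {w₁, w₂}) (hB₂ : block2 W a₂ = {w₂, w₃})
    (hB₃ : block3 W a₃ = {w₃, w₁}) {v : Fin n₁ × Fin n₂ × Fin n₃} (hv : v ∈ W)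
    (hv₁ : v.1 ≠ a₁) : v.2.1 = a₂ ↔ v.2.2 = a₃ := by
  have hw₁ : w₁ ∈ block1 W a₁ := hB₁ ▸ Set.mem_insert _ _
  have hw₂ : w₂ ∈ block1 W a₁ := hB₁ ▸ Set.mem_insert_of_mem _ rfl
  have hw₃₂ : w₃ ∈ block2 W a₂ := hB₂ ▸ Set.mem_insert_of_mem _ rfl
  have hw₃₃ : w₃ ∈ block3 W a₃ := hB₃ ▸ Set.mem_insert _ _
  constructor
  · intro hv₂
    have hmem : v ∈ block2 W a₂ := ⟨hv, hv₂⟩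
    rw [hB₂] at hmem
    rcases hmem with rfl | rfl
    · exact absurd hw₂.2 hv₁
    · exact hw₃₃.2
  · intro hv₃
    have hmem : v ∈ block3 W a₃ := ⟨hv, hv₃⟩
    rw [hB₃] at hmem
    rcases hmem with rfl | rfl
    · exact hw₃₂.2
    · exact absurd hw₁.2 hv₁

lemma HG.adj_castSucc_iff_of_rainbow {n₁ n₂ n₃ : ℕ} {W : Set (Fin n₁ × Fin n₂ × Fin n₃)}
    {a₁ : Fin n₁} {a₂ : Fin n₂} {a₃ : Fin n₃} {w₁ w₂ w₃ : Fin n₁ × Fin n₂ × Fin n₃}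
    (hB₁ : block1 W a₁ = {w₁, w₂}) (hB₂ : block2 W a₂ = {w₂, w₃})
    (hB₃ : block3 W a₃ = {w₃, w₁}) {v : Fin n₁ × Fin n₂ × Fin n₃} (hv : v ∈ W) :
    (HG (n₁+1) (n₂+1) (n₃+1)).Adj (a₁.castSucc, a₂.castSucc, Fin.last n₃)
        (v.1.castSucc, v.2.1.castSucc, v.2.2.castSucc) ↔
      (HG (n₁+1) (n₂+1) (n₃+1)).Adj (a₁.castSucc, Fin.last n₂, a₃.castSucc)
        (v.1.castSucc, v.2.1.castSucc, v.2.2.castSucc) := by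
  by_cases hv₁ : v.1 = a₁
  · simp [HG, hv₁]
  · have hv₂₃ := snd_fst_eq_iff_snd_snd_eq_of_rainbow hB₁ hB₂ hB₃ hv hv₁
    simp [HG, eq_comm (a := Fin.last _), eq_comm (b := v.2.1), eq_comm (b := v.2.2), hv₂₃]

theorem stmt7_general (n₁ n₂ n₃ : ℕ) (h₁ : 3 ≤ n₁) (h₂ : 3 ≤ n₂) (h₃ : 3 ≤ n₃)
    (W : Set (Fin n₁ × Fin n₂ × Fin n₃))
    (a₁ : Fin n₁) (a₂ : Fin n₂) (a₃ : Fin n₃)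
    (w₁ w₂ w₃ : Fin n₁ × Fin n₂ × Fin n₃)
    (hB₁ : block1 W a₁ = {w₁, w₂}) (hB₂ : block2 W a₂ = {w₂, w₃})
    (hB₃ : block3 W a₃ = {w₃, w₁}) :
    -- pass to the larger Hamming graph `HG(n₁+1,n₂+1,n₃+1;3)` via the natural inclusion
    ∀ W' : Set (Fin (n₁+1) × Fin (n₂+1) × Fin (n₃+1)),
      W' = (fun w : Fin n₁ × Fin n₂ × Fin n₃ =>
              (w.1.castSucc, w.2.1.castSucc, w.2.2.castSucc)) '' W
            ∪ {(Fin.last n₁, Fin.last n₂, Fin.last n₃)} →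
      (a₁.castSucc, a₂.castSucc, Fin.last n₃) ∉ W' ∧
      (a₁.castSucc, Fin.last n₂, a₃.castSucc) ∉ W' ∧
      (∀ w ∈ W',
        (HG (n₁+1) (n₂+1) (n₃+1)).dist (a₁.castSucc, a₂.castSucc, Fin.last n₃) w =
        (HG (n₁+1) (n₂+1) (n₃+1)).dist (a₁.castSucc, Fin.last n₂, a₃.castSucc) w) ∧
      ¬ IsResolving W' := by
  intro W' hW'
  set x : Fin (n₁+1) × Fin (n₂+1) × Fin (n₃+1) := (a₁.castSucc, a₂.castSucc, Fin.last n₃)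
  set y : Fin (n₁+1) × Fin (n₂+1) × Fin (n₃+1) := (a₁.castSucc, Fin.last n₂, a₃.castSucc)
  have hxW' : x ∉ W' := by simp [hW', x, Fin.castSucc_ne_last]
  have hyW' : y ∉ W' := by simp [hW', y, Fin.castSucc_ne_last]
  have hsame : ∀ w ∈ W', (HG (n₁+1) (n₂+1) (n₃+1)).dist x w =
      (HG (n₁+1) (n₂+1) (n₃+1)).dist y w := by
    intro w hw
    refine HG.dist_eq_dist_of_adj_iff_s7 (by omega) (by omega) (by omega)
      (ne_of_mem_of_not_mem hw hxW').symm (ne_of_mem_of_not_mem hw hyW').symm ?_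
    rw [hW'] at hw
    rcases hw with ⟨v, hv, rfl⟩ | rfl
    · exact HG.adj_castSucc_iff_of_rainbow hB₁ hB₂ hB₃ hv
    · simp [x, y, HG]
  refine ⟨hxW', hyW', hsame, fun hres => ?_⟩
  obtain ⟨w, hw, hne⟩ := hres x y hxW' hyW' (by simp [x, y, Fin.castSucc_ne_last])
  exact hne (hsame w hw)

theorem stmt7 (n₁ n₂ n₃ : ℕ) (h₁ : 3 ≤ n₁) (h₂ : 3 ≤ n₂) (h₃ : 3 ≤ n₃)
    (W : Set (Fin n₁ × Fin n₂ × Fin n₃))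
    (a₁ : Fin n₁) (a₂ : Fin n₂) (a₃ : Fin n₃)
    (w₁ w₂ w₃ : Fin n₁ × Fin n₂ × Fin n₃)
    (hdist : List.Pairwise (· ≠ ·) [w₁, w₂, w₃])
    (hB₁ : block1 W a₁ = {w₁, w₂}) (hB₂ : block2 W a₂ = {w₂, w₃})
    (hB₃ : block3 W a₃ = {w₃, w₁}) :
    -- pass to the larger Hamming graph `HG(n₁+1,n₂+1,n₃+1;3)` via the natural inclusion
    ∀ W' : Set (Fin (n₁+1) × Fin (n₂+1) × Fin (n₃+1)),
      W' = (fun w : Fin n₁ × Fin n₂ × Fin n₃ =>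
              (w.1.castSucc, w.2.1.castSucc, w.2.2.castSucc)) '' W
            ∪ {(Fin.last n₁, Fin.last n₂, Fin.last n₃)} →
      (a₁.castSucc, a₂.castSucc, Fin.last n₃) ∉ W' ∧
      (a₁.castSucc, Fin.last n₂, a₃.castSucc) ∉ W' ∧
      (∀ w ∈ W',
        (HG (n₁+1) (n₂+1) (n₃+1)).dist (a₁.castSucc, a₂.castSucc, Fin.last n₃) w =
        (HG (n₁+1) (n₂+1) (n₃+1)).dist (a₁.castSucc, Fin.last n₂, a₃.castSucc) w) ∧
      ¬ IsResolving W' :=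
  stmt7_general n₁ n₂ n₃ h₁ h₂ h₃ W a₁ a₂ a₃ w₁ w₂ w₃ hB₁ hB₂ hB₃
end

section
/- For every k ≥ 6 there exists a 3-regular simple graph G on 2k vertices together with a proper 3-edge-coloring c (adjacent edges receive different colors from {1,2,3}) such that G contains: no 4-cycle whose edges use all three colors; no 6-cycle in which each pair of opposite edges has the same color and the three colors around the cycle are all distinct (pattern 1,2,3,1,2,3); and no triangle whose three edges have three distinct colors. -/
/-- `G` is a cubic (3-regular) graph: every vertex has exactly three neighbors. -/
def CubicGraph {V : Type*} (G : SimpleGraph V) : Prop :=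
  ∀ v : V, (G.neighborSet v).ncard = 3

/-- `c` is a proper 3-edge-coloring of `G`: distinct edges sharing a vertex get
different colors. -/
def ProperEdgeColoring {V : Type*} (G : SimpleGraph V) (c : Sym2 V → Fin 3) : Prop :=
  ∀ e₁ ∈ G.edgeSet, ∀ e₂ ∈ G.edgeSet, e₁ ≠ e₂ → (∃ v, v ∈ e₁ ∧ v ∈ e₂) → c e₁ ≠ c e₂

/-- A 4-cycle whose four edges use all three colors. -/
def HasRainbowC4 {V : Type*} (G : SimpleGraph V) (c : Sym2 V → Fin 3) : Prop :=
  ∃ v₁ v₂ v₃ v₄ : V, List.Pairwise (· ≠ ·) [v₁, v₂, v₃, v₄] ∧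
    G.Adj v₁ v₂ ∧ G.Adj v₂ v₃ ∧ G.Adj v₃ v₄ ∧ G.Adj v₄ v₁ ∧
    (∀ col : Fin 3,
      col = c s(v₁, v₂) ∨ col = c s(v₂, v₃) ∨ col = c s(v₃, v₄) ∨ col = c s(v₄, v₁))

/-- A 6-cycle in which opposite edges have the same color and the three colors
around the cycle are pairwise distinct (pattern 1,2,3,1,2,3). -/
def HasBadC6 {V : Type*} (G : SimpleGraph V) (c : Sym2 V → Fin 3) : Prop :=
  ∃ v₁ v₂ v₃ v₄ v₅ v₆ : V, List.Pairwise (· ≠ ·) [v₁, v₂, v₃, v₄, v₅, v₆] ∧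
    G.Adj v₁ v₂ ∧ G.Adj v₂ v₃ ∧ G.Adj v₃ v₄ ∧ G.Adj v₄ v₅ ∧ G.Adj v₅ v₆ ∧ G.Adj v₆ v₁ ∧
    c s(v₁, v₂) = c s(v₄, v₅) ∧ c s(v₂, v₃) = c s(v₅, v₆) ∧ c s(v₃, v₄) = c s(v₆, v₁) ∧
    c s(v₁, v₂) ≠ c s(v₂, v₃) ∧ c s(v₂, v₃) ≠ c s(v₃, v₄) ∧ c s(v₁, v₂) ≠ c s(v₃, v₄)

/-- A triangle whose three edges have three distinct colors. -/
def HasRainbowC3 {V : Type*} (G : SimpleGraph V) (c : Sym2 V → Fin 3) : Prop :=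
  ∃ v₁ v₂ v₃ : V, List.Pairwise (· ≠ ·) [v₁, v₂, v₃] ∧
    G.Adj v₁ v₂ ∧ G.Adj v₂ v₃ ∧ G.Adj v₃ v₁ ∧
    c s(v₁, v₂) ≠ c s(v₂, v₃) ∧ c s(v₂, v₃) ≠ c s(v₃, v₁) ∧ c s(v₁, v₂) ≠ c s(v₃, v₁)

/-!
The graph is the cycle `ZMod (2 * k)`, whose rim edges `{x, x + 1}` are colored `0, 1` by the parity
of `x`, together with the chords `x ~ σ x` of a fixed-point-free involution `σ`, all colored `2`.
As the rim uses only two colors, every triangle, rainbow 4-cycle and bad 6-cycle contains a chord.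
Following the rim steps between its chords turns each of them into an arithmetic relation for `σ`:
a chord of length at most `3`, or two chords whose ends are at rim distance `1` (a square) or `2`
(a hexagon); `Admissible` excludes the first and fixes the colors in the other two. For even `k`
the antipodal map `x ↦ x + k` is admissible because translation by the even `k` preserves colors;
for odd `k`, pairing `v < k` with the element of `[k, 2k)` congruent to `2v` mod `k` produces no
squares or hexagons at all.
-/

section Transfer

variable {V W : Type*} {G : SimpleGraph V} {c : Sym2 V → Fin 3} {f : W → V}

lemma CubicGraph.comap_equiv (e : W ≃ V) (hG : CubicGraph G) : CubicGraph (G.comap e) := by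
  intro v
  rw [show (G.comap e).neighborSet v = e ⁻¹' G.neighborSet (e v) from rfl,
    Set.ncard_preimage_of_injective_subset_range e.injective fun y _ => e.surjective y, hG]

lemma ProperEdgeColoring.comap (hf : Function.Injective f) (hc : ProperEdgeColoring G c) :
    ProperEdgeColoring (G.comap f) (c ∘ Sym2.map f) := by
  intro e₁ he₁ e₂ he₂ hne ⟨v, hv₁, hv₂⟩
  obtain ⟨x, rfl⟩ := Sym2.mem_iff_exists.1 hv₁
  obtain ⟨y, rfl⟩ := Sym2.mem_iff_exists.1 hv₂
  exact hc s(f v, f x) he₁ s(f v, f y) he₂ (fun h => hne (Sym2.map.injective hf h))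
    ⟨f v, Sym2.mem_mk_left _ _, Sym2.mem_mk_left _ _⟩

lemma HasRainbowC3.of_comap (hf : Function.Injective f) :
    HasRainbowC3 (G.comap f) (c ∘ Sym2.map f) → HasRainbowC3 G c :=
  fun ⟨v₁, v₂, v₃, hd, h⟩ => ⟨f v₁, f v₂, f v₃, hd.map f fun _ _ h h' => h (hf h'), h⟩

lemma HasRainbowC4.of_comap (hf : Function.Injective f) :
    HasRainbowC4 (G.comap f) (c ∘ Sym2.map f) → HasRainbowC4 G c :=
  fun ⟨v₁, v₂, v₃, v₄, hd, h⟩ => ⟨f v₁, f v₂, f v₃, f v₄, hd.map f fun _ _ h h' => h (hf h'), h⟩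

lemma HasBadC6.of_comap (hf : Function.Injective f) :
    HasBadC6 (G.comap f) (c ∘ Sym2.map f) → HasBadC6 G c :=
  fun ⟨v₁, v₂, v₃, v₄, v₅, v₆, hd, h⟩ =>
    ⟨f v₁, f v₂, f v₃, f v₄, f v₅, f v₆, hd.map f fun _ _ h h' => h (hf h'), h⟩

end Transfer

lemma Fin.three_eq_two_of_pairwise_ne {a b c : Fin 3} (hab : a ≠ b) (hbc : b ≠ c) (hac : a ≠ c) :
    a = 2 ∨ b = 2 ∨ c = 2 := by
  revert a b c; decide

lemma Fin.three_exists_ne_ne (a b : Fin 3) : ∃ c, c ≠ a ∧ c ≠ b := by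
  revert a b; decide

lemma Int.cast_eq_one_or_neg_one {R : Type*} [Ring R] {s : ℤ} (hs : s.natAbs = 1) :
    (s : R) = 1 ∨ (s : R) = -1 := by
  obtain rfl | rfl : s = 1 ∨ s = -1 := by omega
  exacts [Or.inl Int.cast_one, Or.inr (by push_cast; rfl)]

lemma ZMod.intCast_eq_intCast_iff_of_natAbs_lt {n : ℕ} {a b : ℤ} (h : (b - a).natAbs < n) :
    (a : ZMod n) = b ↔ a = b := by
  rw [ZMod.intCast_eq_intCast_iff_dvd_sub]
  refine ⟨fun hd => ?_, fun hab => hab ▸ by simp⟩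
  have := Int.eq_zero_of_dvd_of_natAbs_lt_natAbs hd (by simpa using h)
  omega

lemma ZMod.val_of_eq_add_natCast {n : ℕ} [NeZero n] {x y : ZMod n} {j : ℕ} (hj : j < n)
    (h : y = x + j) : y.val = x.val + j ∨ y.val + n = x.val + j := by
  have hjv : (j : ZMod n).val = j := ZMod.val_natCast_of_lt hj
  subst h
  by_cases hlt : x.val + j < n
  · exact Or.inl (by rw [ZMod.val_add_of_lt (by rwa [hjv]), hjv])
  · have := ZMod.val_add_val_of_le (a := x) (b := (j : ZMod n)) (by rw [hjv]; omega)
    omega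

lemma apply_add_mul_ne_of_forall {R : Type*} [CommRing R] {σ : R → R} {d : R}
    (h : ∀ y, σ (y + d) ≠ σ y + d ∧ σ (y + d) + d ≠ σ y) (x : R) {a b : ℤ} (ha : a.natAbs = 1)
    (hb : b.natAbs = 1) : σ (x + a * d) ≠ σ x + b * d := by
  have h' := h (x - d)
  rw [sub_add_cancel] at h'
  rcases Int.cast_eq_one_or_neg_one (R := R) ha with h₁ | h₁ <;>
    rcases Int.cast_eq_one_or_neg_one (R := R) hb with h₂ | h₂ <;>
    simp only [h₁, h₂, one_mul, neg_one_mul, ← sub_eq_add_neg]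
  · exact (h x).1
  · exact fun e => (h x).2 (by rw [e]; ring)
  · exact fun e => h'.2 e.symm
  · exact fun e => h'.1 (by rw [e]; ring)

namespace CycleWithChords

variable {k : ℕ}

def parity (k : ℕ) : ZMod (2 * k) →+* ZMod 2 := ZMod.castHom (dvd_mul_right 2 k) (ZMod 2)

def rimColor (x : ZMod (2 * k)) : Fin 3 := if parity k x = 0 then 0 else 1

lemma rimColor_ne_two (x : ZMod (2 * k)) : rimColor x ≠ 2 := by
  unfold rimColor; split_ifs <;> decide

lemma rimColor_add_one_ne (x : ZMod (2 * k)) : rimColor (x + 1) ≠ rimColor x := by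
  unfold rimColor
  rw [map_add, map_one]
  generalize parity k x = p
  revert p; decide

lemma rimColor_add_of_parity_eq_zero {t : ZMod (2 * k)} (ht : parity k t = 0) (x : ZMod (2 * k)) :
    rimColor (x + t) = rimColor x := by
  simp only [rimColor, map_add, ht, add_zero]

/-- The conjuncts `x ≠ y + 1` only make the definition symmetric when `2 = 0`. -/
def edgeColor : Sym2 (ZMod (2 * k)) → Fin 3 :=
  Sym2.lift ⟨fun x y => if y = x + 1 ∧ x ≠ y + 1 then rimColor x
    else if x = y + 1 ∧ y ≠ x + 1 then rimColor y else 2, fun x y => by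
      dsimp only
      split_ifs <;> first | rfl | tauto⟩

lemma edgeColor_add_one (h2 : (2 : ZMod (2 * k)) ≠ 0) (x : ZMod (2 * k)) :
    edgeColor s(x, x + 1) = rimColor x := by
  have : x ≠ x + 1 + 1 := fun h => h2 (by linear_combination -h)
  simp [edgeColor, this]

lemma edgeColor_sub_one (h2 : (2 : ZMod (2 * k)) ≠ 0) (x : ZMod (2 * k)) :
    edgeColor s(x, x - 1) = rimColor (x - 1) := by
  simpa [Sym2.eq_swap] using edgeColor_add_one h2 (x - 1)

lemma edgeColor_add_one_ne_sub_one (h2 : (2 : ZMod (2 * k)) ≠ 0) (x : ZMod (2 * k)) :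
    edgeColor s(x, x + 1) ≠ edgeColor s(x, x - 1) := by
  rw [edgeColor_add_one h2, edgeColor_sub_one h2]
  have := rimColor_add_one_ne (x - 1)
  rwa [sub_add_cancel] at this

lemma edgeColor_step_ne_two (h2 : (2 : ZMod (2 * k)) ≠ 0) {a : ℤ} (ha : a.natAbs = 1)
    (x : ZMod (2 * k)) : edgeColor s(x, x + (a : ZMod (2 * k))) ≠ 2 := by
  rcases Int.cast_eq_one_or_neg_one (R := ZMod (2 * k)) ha with h | h <;> rw [h]
  · simpa [edgeColor_add_one h2] using rimColor_ne_two x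
  · simpa [← sub_eq_add_neg, edgeColor_sub_one h2] using rimColor_ne_two (x - 1)

lemma edgeColor_step_ne_next (h2 : (2 : ZMod (2 * k)) ≠ 0) {a : ℤ} (ha : a.natAbs = 1)
    (x : ZMod (2 * k)) :
    edgeColor s(x, x + (a : ZMod (2 * k))) ≠ edgeColor s(x + (a : ZMod (2 * k)), x + a + a) := by
  rcases Int.cast_eq_one_or_neg_one (R := ZMod (2 * k)) ha with h | h <;> rw [h]
  · rw [edgeColor_add_one h2, edgeColor_add_one h2]
    exact (rimColor_add_one_ne x).symm
  · simp only [← sub_eq_add_neg, edgeColor_sub_one h2]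
    have := rimColor_add_one_ne (x - 1 - 1)
    rwa [sub_add_cancel] at this

lemma edgeColor_add_of_parity_eq_zero {t : ZMod (2 * k)} (ht : parity k t = 0)
    (x y : ZMod (2 * k)) : edgeColor s(x + t, y + t) = edgeColor s(x, y) := by
  simp only [edgeColor, Sym2.lift_mk, ne_eq, add_right_comm x t 1, add_right_comm y t 1,
    add_left_inj, rimColor_add_of_parity_eq_zero ht]

variable (σ : ZMod (2 * k) → ZMod (2 * k))

def graph : SimpleGraph (ZMod (2 * k)) := SimpleGraph.fromRel fun x y => y = x + 1 ∨ y = σ x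

/-- `square`: the two rim edges of the 4-cycle `x, x + a, σ x + b, σ x` have the same color;
`hexagon`: the first and fourth edges of the 6-cycle `x, x + a, x + 2a, σ x + 2b, σ x + b, σ x`
have different colors. -/
structure Admissible : Prop where
  involutive : Function.Involutive σ
  far : ∀ (x : ZMod (2 * k)) (j : ℕ), j ≤ 3 → σ x ≠ x + j
  square : ∀ (x : ZMod (2 * k)) (a b : ℤ), a.natAbs = 1 → b.natAbs = 1 → σ (x + a) = σ x + b →
    edgeColor s(x, x + a) = edgeColor s(σ x, σ x + b)
  hexagon : ∀ (x : ZMod (2 * k)) (a b : ℤ), a.natAbs = 1 → b.natAbs = 1 →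
    σ (x + a + a) = σ x + b + b →
      edgeColor s(x, x + a) ≠ edgeColor s((σ x + b + b : ZMod (2 * k)), σ x + b)

namespace Admissible

variable {σ}

lemma two_ne_zero (H : Admissible σ) : (2 : ZMod (2 * k)) ≠ 0 := by
  intro h
  have hdvd : 2 * k ∣ 2 := (CharP.cast_eq_zero_iff (ZMod (2 * k)) (2 * k) 2).1 (by exact_mod_cast h)
  obtain rfl : k = 1 := by
    have := Nat.le_of_dvd two_pos hdvd
    have := Nat.pos_of_dvd_of_pos hdvd two_pos
    omega
  -- in `ZMod 2` every chord would have length `0` or `1`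
  have h₀ := H.far 0 0 (by norm_num)
  have h₁ := H.far 0 1 (by norm_num)
  generalize σ 0 = y at h₀ h₁
  revert y; decide

lemma ne_add_intCast (H : Admissible σ) (x : ZMod (2 * k)) {m : ℤ} (hm : m.natAbs ≤ 3) :
    σ x ≠ x + m := by
  obtain ⟨j, rfl | rfl⟩ := Int.eq_nat_or_neg m <;>
    simp only [Int.natAbs_neg, Int.natAbs_natCast] at hm
  · simpa using H.far x j hm
  · intro hx
    apply H.far (σ x) j hm
    rw [H.involutive x, hx]
    push_cast
    ring

lemma adj_iff (H : Admissible σ) {x y : ZMod (2 * k)} :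
    (graph σ).Adj x y ↔ y = σ x ∨ ∃ a : ℤ, a.natAbs = 1 ∧ y = x + a := by
  rw [graph, SimpleGraph.fromRel_adj]
  constructor
  · rintro ⟨-, (rfl | rfl) | (rfl | rfl)⟩
    · exact Or.inr ⟨1, rfl, by simp⟩
    · exact Or.inl rfl
    · exact Or.inr ⟨-1, rfl, by push_cast; ring⟩
    · exact Or.inl (H.involutive y).symm
  · rintro (rfl | ⟨a, ha, rfl⟩)
    · exact ⟨fun h => H.far x 0 (by norm_num) (by simp [← h]), Or.inl (Or.inr rfl)⟩
    · rcases Int.cast_eq_one_or_neg_one (R := ZMod (2 * k)) ha with h | h <;> rw [h]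
      · exact ⟨fun h' => H.two_ne_zero (by linear_combination -2 * h'), Or.inl (Or.inl rfl)⟩
      · exact ⟨fun h' => H.two_ne_zero (by linear_combination 2 * h'), Or.inr (Or.inl (by ring))⟩

lemma edgeColor_chord (H : Admissible σ) (x : ZMod (2 * k)) : edgeColor s(x, σ x) = 2 := by
  have h₁ : σ x ≠ x + 1 := by simpa using H.far x 1 (by norm_num)
  have h₂ : x ≠ σ x + 1 := by simpa [H.involutive x] using H.far (σ x) 1 (by norm_num)
  simp [edgeColor, h₁, h₂]

lemma eq_of_adj_of_edgeColor_eq_two (H : Admissible σ) {x y : ZMod (2 * k)}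
    (hxy : (graph σ).Adj x y) (hc : edgeColor s(x, y) = 2) : y = σ x := by
  rcases H.adj_iff.1 hxy with h | ⟨a, ha, rfl⟩
  · exact h
  · exact absurd hc (edgeColor_step_ne_two H.two_ne_zero ha x)

lemma exists_step_of_adj_of_ne (H : Admissible σ) {x y : ZMod (2 * k)}
    (hxy : (graph σ).Adj x y) (hy : y ≠ σ x) : ∃ a : ℤ, a.natAbs = 1 ∧ y = x + a :=
  (H.adj_iff.1 hxy).resolve_left hy

lemma exists_step_of_adj_of_edgeColor_ne_two (H : Admissible σ) {x y : ZMod (2 * k)}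
    (hxy : (graph σ).Adj x y) (hc : edgeColor s(x, y) ≠ 2) : ∃ a : ℤ, a.natAbs = 1 ∧ y = x + a :=
  H.exists_step_of_adj_of_ne hxy fun h => hc (h ▸ H.edgeColor_chord x)

theorem cubicGraph (H : Admissible σ) : CubicGraph (graph σ) := by
  intro x
  have hset : (graph σ).neighborSet x = {x + 1, x - 1, σ x} := by
    ext y
    simp only [SimpleGraph.mem_neighborSet, H.adj_iff, Set.mem_insert_iff, Set.mem_singleton_iff]
    constructor
    · rintro (rfl | ⟨a, ha, rfl⟩)
      · exact Or.inr (Or.inr rfl)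
      · rcases Int.cast_eq_one_or_neg_one (R := ZMod (2 * k)) ha with h | h <;> rw [h]
        exacts [Or.inl rfl, Or.inr (Or.inl (sub_eq_add_neg x 1).symm)]
    · rintro (rfl | rfl | rfl)
      · exact Or.inr ⟨1, rfl, by simp⟩
      · exact Or.inr ⟨-1, rfl, by push_cast; ring⟩
      · exact Or.inl rfl
  rw [hset, Set.ncard_eq_three]
  refine ⟨x + 1, x - 1, σ x, fun h => H.two_ne_zero (by linear_combination h), ?_, ?_, rfl⟩
  · exact fun h => H.ne_add_intCast x (m := 1) (by norm_num) (by simpa using h.symm)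
  · exact fun h => H.ne_add_intCast x (m := -1) (by norm_num)
      (by simpa [sub_eq_add_neg] using h.symm)

theorem properEdgeColoring (H : Admissible σ) : ProperEdgeColoring (graph σ) edgeColor := by
  intro e₁ he₁ e₂ he₂ hne ⟨v, hv₁, hv₂⟩
  obtain ⟨x, rfl⟩ := Sym2.mem_iff_exists.1 hv₁
  obtain ⟨y, rfl⟩ := Sym2.mem_iff_exists.1 hv₂
  have hxy : x ≠ y := fun h => hne (h ▸ rfl)
  rw [SimpleGraph.mem_edgeSet] at he₁ he₂
  rcases H.adj_iff.1 he₁ with rfl | ⟨a, ha, rfl⟩ <;> rcases H.adj_iff.1 he₂ with rfl | ⟨b, hb, rfl⟩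
  · exact absurd rfl hxy
  · exact H.edgeColor_chord v ▸ (edgeColor_step_ne_two H.two_ne_zero hb v).symm
  · exact H.edgeColor_chord v ▸ edgeColor_step_ne_two H.two_ne_zero ha v
  · have h2 := H.two_ne_zero
    rcases Int.cast_eq_one_or_neg_one (R := ZMod (2 * k)) ha with h | h <;>
      rcases Int.cast_eq_one_or_neg_one (R := ZMod (2 * k)) hb with h' | h' <;>
      simp only [h, h', ← sub_eq_add_neg, ne_eq, not_true_eq_false] at hxy ⊢
    · exact edgeColor_add_one_ne_sub_one h2 v
    · exact (edgeColor_add_one_ne_sub_one h2 v).symm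

lemma false_of_triangle_chord (H : Admissible σ) {v₁ v₂ v₃ : ZMod (2 * k)} (h₁₃ : v₁ ≠ v₃)
    (h₂₃ : v₂ ≠ v₃) (hc : v₂ = σ v₁) (a₂₃ : (graph σ).Adj v₂ v₃) (a₃₁ : (graph σ).Adj v₃ v₁) :
    False := by
  obtain ⟨a, ha, e₃⟩ := H.exists_step_of_adj_of_ne a₂₃ (by rw [hc, H.involutive]; exact h₁₃.symm)
  obtain ⟨b, hb, e₁⟩ := H.exists_step_of_adj_of_ne a₃₁ fun h => h₂₃ (by rw [hc, h, H.involutive])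
  exact H.ne_add_intCast v₁ (m := -(a + b)) (by omega)
    (by push_cast; linear_combination -hc - e₃ - e₁)

lemma edgeColor_eq_of_square_chord (H : Admissible σ) {v₁ v₂ v₃ v₄ : ZMod (2 * k)}
    (h₁₃ : v₁ ≠ v₃) (h₂₄ : v₂ ≠ v₄) (hc : v₂ = σ v₁) (a₂₃ : (graph σ).Adj v₂ v₃)
    (a₃₄ : (graph σ).Adj v₃ v₄) (a₄₁ : (graph σ).Adj v₄ v₁) :
    edgeColor s(v₁, v₂) = edgeColor s(v₃, v₄) ∧ edgeColor s(v₂, v₃) = edgeColor s(v₄, v₁) := by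
  obtain ⟨a, ha, e₃⟩ := H.exists_step_of_adj_of_ne a₂₃ (by rw [hc, H.involutive]; exact h₁₃.symm)
  obtain ⟨d, hd, e₁⟩ := H.exists_step_of_adj_of_ne a₄₁ fun h => h₂₄ (by rw [hc, h, H.involutive])
  by_cases hc' : v₄ = σ v₃
  · have hσ₄ : σ v₄ = v₃ := by rw [hc', H.involutive]
    refine ⟨by rw [hc, hc', H.edgeColor_chord, H.edgeColor_chord], ?_⟩
    have := H.square v₄ d (-a) hd (by omega) (by rw [← e₁, ← hc, hσ₄, e₃]; push_cast; ring)
    rw [← e₁, hσ₄, show v₃ + ((-a : ℤ) : ZMod (2 * k)) = v₂ by rw [e₃]; push_cast; ring] at this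
    rw [this, Sym2.eq_swap]
  · obtain ⟨b, hb, e₄⟩ := H.exists_step_of_adj_of_ne a₃₄ hc'
    exact (H.ne_add_intCast v₁ (m := -(a + b + d)) (by omega)
      (by push_cast; linear_combination -hc - e₃ - e₄ - e₁)).elim

lemma false_of_hexagon_chords (H : Admissible σ) {w₁ w₂ w₃ w₄ w₅ w₆ : ZMod (2 * k)}
    (hw : [w₁, w₂, w₃, w₄, w₅, w₆].Nodup) (hc₁ : w₂ = σ w₁) (a₂₃ : (graph σ).Adj w₂ w₃)
    (a₃₄ : (graph σ).Adj w₃ w₄) (hc₄ : w₅ = σ w₄) (a₅₆ : (graph σ).Adj w₅ w₆)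
    (a₆₁ : (graph σ).Adj w₆ w₁) (c₃ : edgeColor s(w₃, w₄) ≠ 2)
    (c₂₅ : edgeColor s(w₂, w₃) = edgeColor s(w₅, w₆))
    (c₃₆ : edgeColor s(w₃, w₄) = edgeColor s(w₆, w₁)) : False := by
  simp only [List.nodup_cons, List.mem_cons, List.not_mem_nil, or_false, not_or] at hw
  obtain ⟨⟨-, h₁₃, -, h₁₅, -⟩, ⟨-, h₂₄, -, -⟩, -, ⟨-, h₄₆⟩, -⟩ := hw
  have hσ₂ : σ w₂ = w₁ := by rw [hc₁, H.involutive]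
  obtain ⟨a, ha, e₃⟩ := H.exists_step_of_adj_of_ne a₂₃ (hσ₂ ▸ Ne.symm h₁₃)
  obtain ⟨b, hb, e₄⟩ := H.exists_step_of_adj_of_edgeColor_ne_two a₃₄ c₃
  obtain ⟨c, hc, e₆⟩ :=
    H.exists_step_of_adj_of_ne a₅₆ (by rw [hc₄, H.involutive]; exact Ne.symm h₄₆)
  obtain ⟨d, hd, e₁⟩ := H.exists_step_of_adj_of_edgeColor_ne_two a₆₁ (c₃₆ ▸ c₃)
  -- the rim paths `w₂ w₃ w₄` and `w₅ w₆ w₁` do not turn back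
  obtain rfl : a = b := by
    by_contra hba
    exact h₂₄ (by rw [e₄, e₃, show b = -a by omega]; push_cast; ring)
  obtain rfl : c = d := by
    by_contra hdc
    exact h₁₅ (by rw [e₁, e₆, show d = -c by omega]; push_cast; ring)
  have e₆' : w₁ + ((-c : ℤ) : ZMod (2 * k)) = w₆ := by rw [e₁]; push_cast; ring
  have e₅' : w₆ + ((-c : ℤ) : ZMod (2 * k)) = w₅ := by rw [e₆]; push_cast; ring
  refine H.hexagon w₂ a (-c) ha (by omega) ?_ (by rw [← e₃, hσ₂, e₆', e₅']; exact c₂₅)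
  rw [← e₃, ← e₄, ← hc₄, hσ₂, e₆', e₅']

theorem not_hasRainbowC3 (H : Admissible σ) : ¬ HasRainbowC3 (graph σ) edgeColor := by
  rintro ⟨v₁, v₂, v₃, hv, a₁₂, a₂₃, a₃₁, n₁₂, n₂₃, n₁₃⟩
  simp only [List.pairwise_cons, List.mem_cons, List.not_mem_nil, or_false, forall_eq_or_imp,
    forall_eq, List.Pairwise.nil] at hv
  obtain ⟨⟨h₁₂, h₁₃⟩, h₂₃, -⟩ := hv
  rcases Fin.three_eq_two_of_pairwise_ne n₁₂ n₂₃ n₁₃ with h | h | h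
  · exact H.false_of_triangle_chord h₁₃ h₂₃ (H.eq_of_adj_of_edgeColor_eq_two a₁₂ h) a₂₃ a₃₁
  · exact H.false_of_triangle_chord h₁₂.symm h₁₃.symm (H.eq_of_adj_of_edgeColor_eq_two a₂₃ h)
      a₃₁ a₁₂
  · exact H.false_of_triangle_chord h₂₃.symm h₁₂ (H.eq_of_adj_of_edgeColor_eq_two a₃₁ h) a₁₂ a₂₃

theorem not_hasRainbowC4 (H : Admissible σ) : ¬ HasRainbowC4 (graph σ) edgeColor := by
  rintro ⟨v₁, v₂, v₃, v₄, hv, a₁₂, a₂₃, a₃₄, a₄₁, hall⟩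
  simp only [List.pairwise_cons, List.mem_cons, List.not_mem_nil, or_false, forall_eq_or_imp,
    forall_eq, List.Pairwise.nil] at hv
  obtain ⟨⟨-, h₁₃, -⟩, ⟨-, h₂₄⟩, -⟩ := hv
  have hopp : edgeColor s(v₁, v₂) = edgeColor s(v₃, v₄) ∧
      edgeColor s(v₂, v₃) = edgeColor s(v₄, v₁) := by
    rcases hall 2 with h | h | h | h <;> have hc := H.eq_of_adj_of_edgeColor_eq_two ‹_› h.symm
    · exact H.edgeColor_eq_of_square_chord h₁₃ h₂₄ hc a₂₃ a₃₄ a₄₁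
    · have := H.edgeColor_eq_of_square_chord h₂₄ h₁₃.symm hc a₃₄ a₄₁ a₁₂
      exact ⟨this.2.symm, this.1⟩
    · have := H.edgeColor_eq_of_square_chord h₁₃.symm h₂₄.symm hc a₄₁ a₁₂ a₂₃
      exact ⟨this.1.symm, this.2.symm⟩
    · have := H.edgeColor_eq_of_square_chord h₂₄.symm h₁₃ hc a₁₂ a₂₃ a₃₄
      exact ⟨this.2, this.1.symm⟩
  obtain ⟨col, h₁, h₂⟩ := Fin.three_exists_ne_ne (edgeColor s(v₁, v₂)) (edgeColor s(v₂, v₃))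
  rcases hall col with h | h | h | h
  · exact h₁ h
  · exact h₂ h
  · exact h₁ (h.trans hopp.1.symm)
  · exact h₂ (h.trans hopp.2.symm)

theorem not_hasBadC6 (H : Admissible σ) : ¬ HasBadC6 (graph σ) edgeColor := by
  rintro ⟨v₁, v₂, v₃, v₄, v₅, v₆, hv, a₁₂, a₂₃, a₃₄, a₄₅, a₅₆, a₆₁, q₁₄, q₂₅, q₃₆, n₁₂, n₂₃, n₁₃⟩
  have hv : [v₁, v₂, v₃, v₄, v₅, v₆].Nodup := hv
  rcases Fin.three_eq_two_of_pairwise_ne n₁₂ n₂₃ n₁₃ with h | h | h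
  · exact H.false_of_hexagon_chords hv (H.eq_of_adj_of_edgeColor_eq_two a₁₂ h) a₂₃ a₃₄
      (H.eq_of_adj_of_edgeColor_eq_two a₄₅ (q₁₄ ▸ h)) a₅₆ a₆₁ (h ▸ n₁₃.symm) q₂₅ q₃₆
  · exact H.false_of_hexagon_chords ((List.nodup_rotate (n := 1)).2 hv)
      (H.eq_of_adj_of_edgeColor_eq_two a₂₃ h) a₃₄ a₄₅
      (H.eq_of_adj_of_edgeColor_eq_two a₅₆ (q₂₅ ▸ h)) a₆₁ a₁₂ (h ▸ q₁₄ ▸ n₁₂) q₃₆ q₁₄.symm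
  · exact H.false_of_hexagon_chords ((List.nodup_rotate (n := 2)).2 hv)
      (H.eq_of_adj_of_edgeColor_eq_two a₃₄ h) a₄₅ a₅₆
      (H.eq_of_adj_of_edgeColor_eq_two a₆₁ (q₃₆ ▸ h)) a₁₂ a₂₃ (h ▸ q₂₅ ▸ n₂₃) q₁₄.symm q₂₅.symm

end Admissible

lemma parity_natCast_eq_zero (he : Even k) : parity k k = 0 := by
  rw [map_natCast, ZMod.natCast_eq_zero_iff_even]
  exact he

def antipodal (k : ℕ) (x : ZMod (2 * k)) : ZMod (2 * k) := x + k

theorem admissible_antipodal (hk : 4 ≤ k) (he : Even k) : Admissible (antipodal k) where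
  involutive x := by
    rw [antipodal, antipodal, add_assoc, ← Nat.cast_add, ← two_mul, ZMod.natCast_self, add_zero]
  far x j hj h := by
    have : ((k : ℤ) : ZMod (2 * k)) = (j : ℤ) := by
      rw [antipodal] at h
      push_cast
      linear_combination h
    rw [ZMod.intCast_eq_intCast_iff_of_natAbs_lt (by omega)] at this
    omega
  square x a b ha hb h := by
    obtain rfl : a = b := by
      rw [← ZMod.intCast_eq_intCast_iff_of_natAbs_lt (n := 2 * k) (by omega)]
      simp only [antipodal] at h
      linear_combination h
    simp only [antipodal, add_right_comm x (k : ZMod (2 * k)),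
      edgeColor_add_of_parity_eq_zero (parity_natCast_eq_zero he)]
  hexagon x a b ha hb h := by
    obtain rfl : a = b := by
      have : ((a + a : ℤ) : ZMod (2 * k)) = ((b + b : ℤ) : ZMod (2 * k)) := by
        simp only [antipodal] at h
        push_cast
        linear_combination h
      rw [ZMod.intCast_eq_intCast_iff_of_natAbs_lt (by omega)] at this
      omega
    have h2 : (2 : ZMod (2 * k)) ≠ 0 := by
      simpa using (ZMod.intCast_eq_intCast_iff_of_natAbs_lt (n := 2 * k) (a := 2) (b := 0)
        (by omega)).not.2 (by norm_num)
    simp only [antipodal, add_right_comm x (k : ZMod (2 * k)),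
      add_right_comm (x + a) (k : ZMod (2 * k)),
      edgeColor_add_of_parity_eq_zero (parity_natCast_eq_zero he)]
    rw [Sym2.eq_swap (a := x + a + a)]
    exact edgeColor_step_ne_next h2 ha x

/-- For odd `k`, each `v < k` is paired with the element of `[k, 2k)` congruent to `2v` mod `k`. -/
def pairing (k v : ℕ) : ℕ :=
  if v < k then (if 2 * v < k then 2 * v + k else 2 * v)
  else if v % 2 = 1 then (v - k) / 2 else v / 2

lemma pairing_spec (ho : k % 2 = 1) {v : ℕ} (hv : v < 2 * k) :
    (2 * v < k ∧ pairing k v = 2 * v + k) ∨ (v < k ∧ k ≤ 2 * v ∧ pairing k v = 2 * v) ∨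
      (k ≤ v ∧ 2 * pairing k v + k = v) ∨ (k ≤ v ∧ 2 * pairing k v = v) := by
  unfold pairing
  split_ifs <;> omega

def doubling (k : ℕ) (x : ZMod (2 * k)) : ZMod (2 * k) := (pairing k x.val : ZMod (2 * k))

lemma val_doubling [NeZero (2 * k)] (ho : k % 2 = 1) (x : ZMod (2 * k)) :
    (doubling k x).val = pairing k x.val :=
  ZMod.val_natCast_of_lt (by have := pairing_spec ho (ZMod.val_lt x); have := ZMod.val_lt x; omega)

lemma doubling_add_ne [NeZero (2 * k)] (hk : 7 ≤ k) (ho : k % 2 = 1) {d : ℕ} (hd₁ : 1 ≤ d)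
    (hd₂ : d ≤ 2) (y : ZMod (2 * k)) :
    doubling k (y + (d : ZMod (2 * k))) ≠ doubling k y + d ∧
      doubling k (y + d) + (d : ZMod (2 * k)) ≠ doubling k y := by
  set z := y + (d : ZMod (2 * k)) with hz
  have := ZMod.val_lt y
  have := ZMod.val_lt z
  have hy := pairing_spec ho (ZMod.val_lt y)
  have hz' := pairing_spec ho (ZMod.val_lt z)
  have hstep := ZMod.val_of_eq_add_natCast (by omega) hz
  constructor <;> intro h
  · have := ZMod.val_of_eq_add_natCast (by omega) h
    rw [val_doubling ho, val_doubling ho] at this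
    omega
  · have := ZMod.val_of_eq_add_natCast (by omega) h.symm
    rw [val_doubling ho, val_doubling ho] at this
    omega

theorem admissible_doubling (hk : 7 ≤ k) (ho : Odd k) : Admissible (doubling k) := by
  have : NeZero (2 * k) := ⟨by omega⟩
  have ho : k % 2 = 1 := Nat.odd_iff.1 ho
  refine ⟨fun x => ?_, fun x j hj h => ?_, fun x a b ha hb h => ?_, fun x a b ha hb h => ?_⟩
  · apply ZMod.val_injective
    have := ZMod.val_lt x
    have hx := pairing_spec ho this
    have hσx := pairing_spec ho (ZMod.val_lt (doubling k x))
    rw [val_doubling ho] at hσx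
    rw [val_doubling ho, val_doubling ho]
    omega
  · have hσx := ZMod.val_of_eq_add_natCast (by omega) h
    have := ZMod.val_lt x
    have hx := pairing_spec ho (ZMod.val_lt x)
    rw [val_doubling ho] at hσx
    omega
  · refine absurd ?_ (apply_add_mul_ne_of_forall (doubling_add_ne hk ho le_rfl one_le_two) x ha hb)
    simpa using h
  · refine absurd ?_ (apply_add_mul_ne_of_forall (doubling_add_ne hk ho one_le_two le_rfl) x ha hb)
    rw [show x + a * ((2 : ℕ) : ZMod (2 * k)) = x + a + a by push_cast; ring, h]
    push_cast
    ring

end CycleWithChords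

theorem stmt10 (k : ℕ) (hk : 6 ≤ k) :
    ∃ (G : SimpleGraph (Fin (2 * k))) (c : Sym2 (Fin (2 * k)) → Fin 3),
      CubicGraph G ∧ ProperEdgeColoring G c ∧
      ¬ HasRainbowC4 G c ∧ ¬ HasBadC6 G c ∧ ¬ HasRainbowC3 G c := by
  obtain ⟨σ, H⟩ : ∃ σ : ZMod (2 * k) → ZMod (2 * k), CycleWithChords.Admissible σ := by
    rcases Nat.even_or_odd k with he | ho
    · exact ⟨_, CycleWithChords.admissible_antipodal (by omega) he⟩
    · exact ⟨_, CycleWithChords.admissible_doubling (by have := Nat.odd_iff.1 ho; omega) ho⟩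
  have : NeZero (2 * k) := ⟨by omega⟩
  let e : Fin (2 * k) ≃ ZMod (2 * k) := (ZMod.finEquiv (2 * k)).toEquiv
  exact ⟨(CycleWithChords.graph σ).comap e, CycleWithChords.edgeColor ∘ Sym2.map e,
    H.cubicGraph.comap_equiv e, H.properEdgeColoring.comap e.injective,
    mt (HasRainbowC4.of_comap e.injective) H.not_hasRainbowC4,
    mt (HasBadC6.of_comap e.injective) H.not_hasBadC6,
    mt (HasRainbowC3.of_comap e.injective) H.not_hasRainbowC3⟩
end
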